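/- Let f¹, …, fᵐ : ℝⁿ → ℝ be convex functions such that every subgradient of fⁱ at any point has norm at most C_i, and set f = Σ_{i=1}^m fⁱ. Let λ ≥ 0, x ∈ ℝⁿ, and let z be the output of an incremental subgradient pass from x with stepsize λ. Then for every y ∈ ℝⁿ: ‖z − y‖² ≤ ‖x − y‖² − 2λ(f(z) − f(y)) + 3λ²(Σ_{i=1}^m C_i)². -/

import Mathlib

open Filter Topology

/-- `v` is a subgradient of `f` at `x`. -/
def IsSubgrad {n : ℕ} (f : EuclideanSpace ℝ (Fin n) → ℝ)
    (v x : EuclideanSpace ℝ (Fin n)) : Prop :=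
  ∀ y, f y ≥ f x + inner ℝ v (y - x)

/-- `z` is the output of an incremental subgradient pass for `f 0, …, f (m-1)`
starting at `x` with stepsize `lam`. -/
def IsIncPass {n m : ℕ} (f : Fin m → (EuclideanSpace ℝ (Fin n) → ℝ))
    (lam : ℝ) (x z : EuclideanSpace ℝ (Fin n)) : Prop :=
  ∃ w : Fin (m + 1) → EuclideanSpace ℝ (Fin n),
    w 0 = x ∧ w (Fin.last m) = z ∧
    ∀ i : Fin m, ∃ v, IsSubgrad (f i) v (w i.castSucc) ∧
      w i.succ = w i.castSucc - lam • v

/-!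
A subgradient step towards `y` loses at most `λ²‖v‖²`: expanding the square,
`‖x - λ v - y‖² = ‖x - y‖² - 2λ⟪v, x - y⟫ + λ²‖v‖²`, and `⟪v, x - y⟫ ≥ fⁱ(x) - fⁱ(y)`.
Along the pass each `fⁱ` is thus evaluated at its own iterate instead of at the output `z`.
Every iterate lies within `λ ∑ C` of `z` and `fⁱ` is `Cᵢ`-Lipschitz, so switching to `z` costs
at most `2λ² Cᵢ ∑ C`; with `λ² ∑ Cᵢ² ≤ λ² (∑ C)²` this gives the constant `3`.
The Lipschitz bound needs subgradients to exist everywhere: they come from Hahn–Banach applied to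
the sublinear one-sided directional derivative `d ↦ f'(x; d)`.
-/

open Set

section LinearSubgradient

variable {E : Type*} [AddCommGroup E] [Module ℝ E] {f : E → ℝ}

noncomputable def rightLineDeriv (f : E → ℝ) (x d : E) : ℝ :=
  ⨅ t : Ioi (0 : ℝ), (f (x + (t : ℝ) • d) - f x) / t

theorem ConvexOn.slope_mono_along (hf : ConvexOn ℝ univ f) (x d : E) {s t : ℝ}
    (hs : s ≠ 0) (ht : t ≠ 0) (hst : s ≤ t) :
    (f (x + s • d) - f x) / s ≤ (f (x + t • d) - f x) / t := by
  have hline : ConvexOn ℝ univ fun t : ℝ => f (x + t • d) := by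
    simpa [Function.comp_def, AffineMap.lineMap_apply, add_comm]
      using hf.comp_affineMap (AffineMap.lineMap x (x + d))
  simpa using hline.secant_mono (mem_univ 0) (mem_univ s) (mem_univ t) hs ht hst

theorem ConvexOn.bddBelow_slope (hf : ConvexOn ℝ univ f) (x d : E) :
    BddBelow (range fun t : Ioi (0 : ℝ) => (f (x + (t : ℝ) • d) - f x) / t) := by
  refine ⟨(f (x + (-1 : ℝ) • d) - f x) / (-1), ?_⟩
  rintro _ ⟨⟨t, ht⟩, rfl⟩
  exact hf.slope_mono_along x d (by norm_num) ht.out.ne' (by linarith [ht.out])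

theorem ConvexOn.rightLineDeriv_le (hf : ConvexOn ℝ univ f) (x d : E) {t : ℝ} (ht : 0 < t) :
    rightLineDeriv f x d ≤ (f (x + t • d) - f x) / t :=
  ciInf_le (hf.bddBelow_slope x d) ⟨t, ht⟩

theorem rightLineDeriv_zero (f : E → ℝ) (x : E) : rightLineDeriv f x 0 = 0 := by
  simp [rightLineDeriv]

theorem rightLineDeriv_smul (f : E → ℝ) (x d : E) {c : ℝ} (hc : 0 < c) :
    rightLineDeriv f x (c • d) = c * rightLineDeriv f x d := by
  have hsurj :
      Function.Surjective fun t : Ioi (0 : ℝ) => (⟨c * t, mul_pos hc t.2⟩ : Ioi (0 : ℝ)) :=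
    fun s => ⟨⟨s / c, div_pos s.2 hc⟩, Subtype.ext (mul_div_cancel₀ _ hc.ne')⟩
  rw [rightLineDeriv, rightLineDeriv, Real.mul_iInf_of_nonneg hc.le]
  refine Eq.trans (iInf_congr fun t => ?_)
    (congrArg sInf <|
      hsurj.range_comp fun s : Ioi (0 : ℝ) => c * ((f (x + (s : ℝ) • d) - f x) / s))
  have ht : (t : ℝ) ≠ 0 := t.2.out.ne'
  simp only [Function.comp_apply, smul_smul]
  field_simp

theorem ConvexOn.rightLineDeriv_add_le (hf : ConvexOn ℝ univ f) (x d₁ d₂ : E) :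
    rightLineDeriv f x (d₁ + d₂) ≤ rightLineDeriv f x d₁ + rightLineDeriv f x d₂ := by
  refine le_ciInf_add_ciInf fun ⟨s, hs⟩ ⟨t, ht⟩ => ?_
  have hs : 0 < s := hs
  have ht : 0 < t := ht
  set r := min s t
  have hr : 0 < r := lt_min hs ht
  have hmid :
      x + (r / 2) • (d₁ + d₂) = (1 / 2 : ℝ) • (x + r • d₁) + (1 / 2 : ℝ) • (x + r • d₂) := by
    module
  have hconv := hf.2 (mem_univ (x + r • d₁)) (mem_univ (x + r • d₂))
    (by norm_num : (0 : ℝ) ≤ 1 / 2) (by norm_num : (0 : ℝ) ≤ 1 / 2) (by norm_num)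
  have hhalf : (f (x + (r / 2) • (d₁ + d₂)) - f x) / (r / 2)
      ≤ (f (x + r • d₁) - f x) / r + (f (x + r • d₂) - f x) / r := by
    rw [hmid, ← add_div, div_le_div_iff₀ (by positivity) hr]
    simp only [smul_eq_mul] at hconv
    nlinarith
  calc rightLineDeriv f x (d₁ + d₂) ≤ (f (x + (r / 2) • (d₁ + d₂)) - f x) / (r / 2) :=
        hf.rightLineDeriv_le x _ (by positivity)
    _ ≤ (f (x + r • d₁) - f x) / r + (f (x + r • d₂) - f x) / r := hhalf
    _ ≤ _ := add_le_add (hf.slope_mono_along x d₁ hr.ne' hs.ne' (min_le_left s t))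
        (hf.slope_mono_along x d₂ hr.ne' ht.ne' (min_le_right s t))

theorem ConvexOn.exists_linearMap_le_sub (hf : ConvexOn ℝ univ f) (x : E) :
    ∃ g : E →ₗ[ℝ] ℝ, ∀ y, g (y - x) ≤ f y - f x := by
  obtain ⟨g, -, hg⟩ := exists_extension_of_le_sublinear (⟨⊥, 0⟩ : E →ₗ.[ℝ] ℝ)
    (rightLineDeriv f x) (fun c hc d => rightLineDeriv_smul f x d hc) (hf.rightLineDeriv_add_le x)
    (fun ⟨d, hd⟩ => by
      obtain rfl := (Submodule.mem_bot ℝ).mp hd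
      simp [rightLineDeriv_zero])
  refine ⟨g, fun y => (hg (y - x)).trans ?_⟩
  simpa using hf.rightLineDeriv_le x (y - x) one_pos

end LinearSubgradient

section Subgradient

variable {n : ℕ} {f : EuclideanSpace ℝ (Fin n) → ℝ} {c lam : ℝ}

theorem ConvexOn.exists_isSubgrad (hf : ConvexOn ℝ univ f) (x : EuclideanSpace ℝ (Fin n)) :
    ∃ v, IsSubgrad f v x := by
  obtain ⟨g, hg⟩ := hf.exists_linearMap_le_sub x
  refine ⟨(InnerProductSpace.toDual ℝ _).symm (LinearMap.toContinuousLinearMap g), fun y => ?_⟩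
  rw [InnerProductSpace.toDual_symm_apply, LinearMap.coe_toContinuousLinearMap']
  linarith [hg y]

theorem ConvexOn.nonneg_of_isSubgrad_norm_le (hf : ConvexOn ℝ univ f)
    (hc : ∀ z v, IsSubgrad f v z → ‖v‖ ≤ c) : 0 ≤ c := by
  obtain ⟨v, hv⟩ := hf.exists_isSubgrad 0
  exact (norm_nonneg v).trans (hc 0 v hv)

theorem ConvexOn.sub_le_mul_norm_of_isSubgrad_norm_le (hf : ConvexOn ℝ univ f)
    (hc : ∀ z v, IsSubgrad f v z → ‖v‖ ≤ c) (a b : EuclideanSpace ℝ (Fin n)) :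
    f a - f b ≤ c * ‖a - b‖ := by
  obtain ⟨u, hu⟩ := hf.exists_isSubgrad a
  have hinner : inner ℝ u (a - b) ≤ c * ‖a - b‖ :=
    (real_inner_le_norm u _).trans (mul_le_mul_of_nonneg_right (hc a u hu) (norm_nonneg _))
  have hsub := hu b
  rw [← neg_sub a b, inner_neg_right] at hsub
  linarith

theorem IsSubgrad.norm_sub_smul_sub_sq_le {v x : EuclideanSpace ℝ (Fin n)} (hv : IsSubgrad f v x)
    (hlam : 0 ≤ lam) (y : EuclideanSpace ℝ (Fin n)) :
    ‖x - lam • v - y‖ ^ 2 ≤ ‖x - y‖ ^ 2 - 2 * lam * (f x - f y) + lam ^ 2 * ‖v‖ ^ 2 := by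
  have hsub := hv y
  rw [← neg_sub x y, inner_neg_right] at hsub
  have hexpand :
      ‖x - lam • v - y‖ ^ 2 = ‖x - y‖ ^ 2 - 2 * lam * inner ℝ v (x - y) + lam ^ 2 * ‖v‖ ^ 2 := by
    rw [sub_right_comm, norm_sub_sq_real, real_inner_smul_right, norm_smul, Real.norm_eq_abs,
      abs_of_nonneg hlam, real_inner_comm]
    ring
  rw [hexpand]
  nlinarith

end Subgradient

section IncrementalPass

variable {n : ℕ} {lam : ℝ} {x z : EuclideanSpace ℝ (Fin n)}

theorem IsIncPass.eq_of_fin_zero {f : Fin 0 → EuclideanSpace ℝ (Fin n) → ℝ}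
    (h : IsIncPass f lam x z) : z = x := by
  obtain ⟨w, hw0, hwl, -⟩ := h
  rw [← hw0, ← hwl]
  rfl

theorem IsIncPass.exists_first_step {m : ℕ}
    {f : Fin (m + 1) → EuclideanSpace ℝ (Fin n) → ℝ} (h : IsIncPass f lam x z) :
    ∃ v, IsSubgrad (f 0) v x ∧ IsIncPass (fun i => f i.succ) lam (x - lam • v) z := by
  obtain ⟨w, hw0, hwl, hstep⟩ := h
  obtain ⟨v, hv, hw1⟩ := hstep 0
  rw [Fin.castSucc_zero, hw0] at hv hw1
  refine ⟨v, hv, fun i => w i.succ, hw1, by simpa only [Fin.succ_last] using hwl, fun i => ?_⟩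
  simpa only [Fin.succ_castSucc] using hstep i.succ

theorem IsIncPass.norm_sub_le {m : ℕ} {f : Fin m → EuclideanSpace ℝ (Fin n) → ℝ}
    {C : Fin m → ℝ}
    (hC : ∀ i, ∀ z v, IsSubgrad (f i) v z → ‖v‖ ≤ C i) (hlam : 0 ≤ lam)
    (h : IsIncPass f lam x z) : ‖z - x‖ ≤ lam * ∑ i, C i := by
  induction m generalizing x with
  | zero => simp [h.eq_of_fin_zero]
  | succ m ih =>
    obtain ⟨v, hv, hrest⟩ := h.exists_first_step
    have hstep : ‖x - lam • v - x‖ ≤ lam * C 0 := by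
      rw [sub_sub_cancel_left, norm_neg, norm_smul, Real.norm_of_nonneg hlam]
      exact mul_le_mul_of_nonneg_left (hC 0 x v hv) hlam
    calc ‖z - x‖ ≤ ‖z - (x - lam • v)‖ + ‖x - lam • v - x‖ :=
          norm_sub_le_norm_sub_add_norm_sub ..
      _ ≤ lam * ∑ i : Fin m, C i.succ + lam * C 0 :=
        add_le_add (ih (fun i => hC i.succ) hrest) hstep
      _ = lam * ∑ i, C i := by rw [Fin.sum_univ_succ]; ring

theorem IsIncPass.norm_sub_sq_le {m : ℕ} {f : Fin m → EuclideanSpace ℝ (Fin n) → ℝ}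
    {C : Fin m → ℝ} (hf : ∀ i, ConvexOn ℝ univ (f i))
    (hC : ∀ i, ∀ z v, IsSubgrad (f i) v z → ‖v‖ ≤ C i) (hlam : 0 ≤ lam)
    (h : IsIncPass f lam x z) (y : EuclideanSpace ℝ (Fin n)) :
    ‖z - y‖ ^ 2 ≤ ‖x - y‖ ^ 2 - 2 * lam * ((∑ i, f i z) - ∑ i, f i y)
      + 3 * lam ^ 2 * (∑ i, C i) ^ 2 := by
  induction m generalizing x with
  | zero => simp [h.eq_of_fin_zero]
  | succ m ih =>
    obtain ⟨v, hv, hrest⟩ := h.exists_first_step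
    set S := ∑ i : Fin m, C i.succ
    have hS : 0 ≤ S :=
      Finset.sum_nonneg fun i _ => (hf i.succ).nonneg_of_isSubgrad_norm_le (hC i.succ)
    have hC0 : 0 ≤ C 0 := (hf 0).nonneg_of_isSubgrad_norm_le (hC 0)
    have hfirst :
        ‖x - lam • v - y‖ ^ 2 ≤ ‖x - y‖ ^ 2 - 2 * lam * (f 0 x - f 0 y) + lam ^ 2 * C 0 ^ 2 :=
      (hv.norm_sub_smul_sub_sq_le hlam y).trans (by gcongr; exact hC 0 x v hv)
    have hdrift : f 0 z - f 0 x ≤ C 0 * (lam * (C 0 + S)) := by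
      calc f 0 z - f 0 x ≤ C 0 * ‖z - x‖ :=
            (hf 0).sub_le_mul_norm_of_isSubgrad_norm_le (hC 0) z x
        _ ≤ C 0 * (lam * (C 0 + S)) := by
          gcongr
          simpa [Fin.sum_univ_succ] using h.norm_sub_le hC hlam
    have hrest' := ih (fun i => hf i.succ) (fun i => hC i.succ) hrest
    rw [Fin.sum_univ_succ (fun i => f i z), Fin.sum_univ_succ (fun i => f i y), Fin.sum_univ_succ C]
    -- the errors add up to `λ²C₀² + 2λ²C₀(C₀ + S) + 3λ²S² ≤ 3λ²(C₀ + S)²`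
    linarith [mul_le_mul_of_nonneg_left hdrift hlam,
      mul_nonneg (mul_nonneg (sq_nonneg lam) hC0) hS]

end IncrementalPass

/-- The incremental subgradient inequality with the function value evaluated at
the output point of the pass. -/
theorem incremental_subgradient_inequality_at_output {n m : ℕ}
    (f : Fin m → (EuclideanSpace ℝ (Fin n) → ℝ))
    (hfconv : ∀ i, ConvexOn ℝ Set.univ (f i))
    (C : Fin m → ℝ) (hC : ∀ i, ∀ z v, IsSubgrad (f i) v z → ‖v‖ ≤ C i)
    (lam : ℝ) (hlam : 0 ≤ lam)
    (x z : EuclideanSpace ℝ (Fin n)) (hpass : IsIncPass f lam x z)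
    (y : EuclideanSpace ℝ (Fin n)) :
    ‖z - y‖ ^ 2 ≤ ‖x - y‖ ^ 2 - 2 * lam * ((∑ i, f i z) - ∑ i, f i y)
      + 3 * lam ^ 2 * (∑ i, C i) ^ 2 :=
  hpass.norm_sub_sq_le hfconv hC hlam y
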